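/- Fix real numbers λ_1 < … < λ_{n−1} and let F: {μ ∈ ℝ^n : μ_1 < λ_1 < μ_2 < … < λ_{n−1} < μ_n} → ℝ^n be the map μ ↦ (ξ_1,…,ξ_{n−1},η), where ξ_α = −∏_{p=1}^{n}(μ_p−λ_α) / ∏_{1≤β≤n−1, β≠α}(λ_β−λ_α) and η = Σ_{p=1}^{n} μ_p − Σ_{β=1}^{n−1} λ_β. Then at every point μ of the domain, the absolute value of the Jacobian determinant of F (the determinant of the matrix of partial derivatives ∂ξ_α/∂μ_p and ∂η/∂μ_p) equals ∏_{1≤p<q≤n}(μ_q−μ_p) / ∏_{1≤α<β≤n−1}(λ_β−λ_α). -/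

import Mathlib

open MeasureTheory Complex Finset

noncomputable section

/-- `mval μ p` is the `p`-th coordinate of `μ : Fin n → ℝ` in 1-based indexing
(meaningful for `1 ≤ p ≤ n`); junk value `0` outside this range. -/
def mval {n : ℕ} (μ : Fin n → ℝ) (p : ℕ) : ℝ :=
  if h : 1 ≤ p ∧ p ≤ n then μ ⟨p - 1, by omega⟩ else 0

/-- The interlacing domain: `μ_1 < λ_1 < μ_2 < λ_2 < … < λ_{n-1} < μ_n`. -/
def Xi (n : ℕ) (lam : ℕ → ℝ) : Set (Fin n → ℝ) :=
  {μ | ∀ α : ℕ, 1 ≤ α → α ≤ n - 1 → mval μ α < lam α ∧ lam α < mval μ (α + 1)}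

/-- `ξ_α = -∏_{p=1}^n (μ_p - λ_α) / ∏_{β ≠ α} (λ_β - λ_α)`. -/
def xiv (n : ℕ) (lam : ℕ → ℝ) (μ : Fin n → ℝ) (α : ℕ) : ℝ :=
  -(∏ p ∈ Icc 1 n, (mval μ p - lam α)) /
    ∏ β ∈ (Icc 1 (n - 1)).erase α, (lam β - lam α)

/-- `η = Σ_p μ_p - Σ_β λ_β`. -/
def etav (n : ℕ) (lam : ℕ → ℝ) (μ : Fin n → ℝ) : ℝ :=
  ∑ p ∈ Icc 1 n, mval μ p - ∑ β ∈ Icc 1 (n - 1), lam β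

/-- The Anderson-type change of variables `μ ↦ (ξ_1, …, ξ_{n-1}, η)`. -/
def Fmap (n : ℕ) (lam : ℕ → ℝ) (μ : Fin n → ℝ) : Fin n → ℝ :=
  fun k => if k.1 + 1 ≤ n - 1 then xiv n lam μ (k.1 + 1) else etav n lam μ

/-!
Write `n = m + 1` and `P_p = ∏_{q ≠ p} (X - μ_q)`. Then
`∂ξ_α/∂μ_p = ± P_p(λ_α) / ∏_{β ≠ α} (λ_β - λ_α)`, and `∂η/∂μ_p = 1` is the leading
coefficient of `P_p`. Hence the Jacobian matrix is a diagonal matrix times `B * C`, where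
column `p` of `C` holds the coefficients of `P_p`, and `B` evaluates a polynomial of degree
`≤ m` at the `λ_α` and reads off its coefficient of `X^m`; expanding along that last row,
`det B` is the Vandermonde determinant `V(λ)`. Since `V(μ) * C` is the diagonal matrix of the
`P_p(μ_p)`, `|V(μ)| |det C| = ∏_p ∏_{q ≠ p} |μ_p - μ_q| = V(μ)²`, and in the same way the
diagonal factor has determinant `± V(λ)⁻²`.
-/

open Polynomial Matrix Lagrange

section Vandermonde

variable {R : Type*} [CommRing R] {n : ℕ}

theorem sum_pow_mul_coeff_eq_eval {f : R[X]} (hf : f.natDegree < n) (x : R) :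
    ∑ j : Fin n, x ^ (j : ℕ) * f.coeff j = f.eval x := by
  rw [eval_eq_sum_range' hf, ← Fin.sum_univ_eq_sum_range (fun j => f.coeff j * x ^ j)]
  simp only [mul_comm]

def nodalCoeffMatrix (x : Fin n → R) : Matrix (Fin n) (Fin n) R :=
  of fun j p => (nodal {p}ᶜ x).coeff j

theorem natDegree_nodal_compl [Nontrivial R] (x : Fin (n + 1) → R) (p : Fin (n + 1)) :
    (nodal {p}ᶜ x).natDegree = n := by
  simp [natDegree_nodal, card_compl]

theorem vandermonde_mul_nodalCoeffMatrix [Nontrivial R] (x : Fin (n + 1) → R) :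
    vandermonde x * nodalCoeffMatrix x = diagonal fun p => ∏ q ∈ {p}ᶜ, (x p - x q) := by
  ext i p
  simp only [mul_apply, vandermonde_apply, nodalCoeffMatrix, of_apply]
  rw [sum_pow_mul_coeff_eq_eval (by rw [natDegree_nodal_compl]; omega), eval_nodal]
  rcases eq_or_ne i p with rfl | hip
  · rw [diagonal_apply_eq]
  · rw [diagonal_apply_ne _ hip]
    exact prod_eq_zero (by simpa using hip) (sub_self _)

theorem det_vandermonde_mul_det_nodalCoeffMatrix [Nontrivial R] (x : Fin (n + 1) → R) :
    det (vandermonde x) * det (nodalCoeffMatrix x) = ∏ p, ∏ q ∈ {p}ᶜ, (x p - x q) := by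
  rw [← det_mul, vandermonde_mul_nodalCoeffMatrix, det_diagonal]

def evalLeadingCoeffMatrix (a : Fin n → R) : Matrix (Fin (n + 1)) (Fin (n + 1)) R :=
  of (Fin.lastCases (Pi.single (Fin.last n) 1) fun α j => a α ^ (j : ℕ))

theorem det_evalLeadingCoeffMatrix (a : Fin n → R) :
    det (evalLeadingCoeffMatrix a) = det (vandermonde a) := by
  rw [det_succ_row _ (Fin.last n), Fin.sum_univ_castSucc]
  simp [evalLeadingCoeffMatrix, Fin.succAbove_last, vandermonde, submatrix]

theorem evalLeadingCoeffMatrix_mul_nodalCoeffMatrix [Nontrivial R] (a : Fin n → R)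
    (x : Fin (n + 1) → R) :
    evalLeadingCoeffMatrix a * nodalCoeffMatrix x =
      of fun k p => Fin.lastCases 1 (fun α => ∏ q ∈ {p}ᶜ, (a α - x q)) k := by
  ext k p
  induction k using Fin.lastCases with
  | last =>
    simp only [evalLeadingCoeffMatrix, mul_apply, of_apply, Fin.lastCases_last, Pi.single_apply,
      boole_mul, sum_ite_eq', mem_univ, if_true, nodalCoeffMatrix, Fin.val_last]
    have h := (nodal_monic (s := {p}ᶜ) (v := x)).coeff_natDegree
    rwa [natDegree_nodal_compl] at h
  | cast α =>
    simp only [evalLeadingCoeffMatrix, mul_apply, of_apply, Fin.lastCases_castSucc,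
      nodalCoeffMatrix]
    rw [sum_pow_mul_coeff_eq_eval (by rw [natDegree_nodal_compl]; omega), eval_nodal]

end Vandermonde

section OrderedVandermonde

variable {K : Type*} [CommRing K] [LinearOrder K] [IsStrictOrderedRing K] {n : ℕ}

theorem prod_prod_compl_abs_sub (x : Fin n → K) :
    ∏ p, ∏ q ∈ {p}ᶜ, |x q - x p| = |det (vandermonde x)| ^ 2 := by
  rw [det_vandermonde, ← prod_prod_Ioi_mul_eq_prod_prod_off_diag, abs_prod, sq,
    ← prod_mul_distrib]
  refine prod_congr rfl fun i _ => ?_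
  rw [abs_prod, ← prod_mul_distrib]
  exact prod_congr rfl fun j _ => by rw [abs_sub_comm (x i)]

theorem abs_det_nodalCoeffMatrix {x : Fin (n + 1) → K} (hx : Function.Injective x) :
    |det (nodalCoeffMatrix x)| = |det (vandermonde x)| := by
  have hV : |det (vandermonde x)| ≠ 0 := abs_ne_zero.2 (det_vandermonde_ne_zero_iff.2 hx)
  refine mul_left_cancel₀ hV ?_
  rw [← abs_mul, det_vandermonde_mul_det_nodalCoeffMatrix, abs_prod, ← sq,
    ← prod_prod_compl_abs_sub]
  exact prod_congr rfl fun p _ => by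
    rw [abs_prod]; exact prod_congr rfl fun q _ => abs_sub_comm _ _

theorem det_vandermonde_pos {x : Fin n → K} (hx : StrictMono x) : 0 < det (vandermonde x) := by
  rw [det_vandermonde]
  exact prod_pos fun i _ => prod_pos fun j hj => sub_pos.2 (hx (mem_Ioi.1 hj))

end OrderedVandermonde

section Anderson

variable {m : ℕ} (a : Fin m → ℝ)

def andersonMap (x : Fin (m + 1) → ℝ) : Fin (m + 1) → ℝ :=
  Fin.lastCases (∑ p, x p - ∑ α, a α)
    fun α => -(∏ p, (x p - a α)) / ∏ β ∈ {α}ᶜ, (a β - a α)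

def andersonJacobian (x : Fin (m + 1) → ℝ) : Matrix (Fin (m + 1)) (Fin (m + 1)) ℝ :=
  of fun k p => Fin.lastCases 1
    (fun α => -(∏ q ∈ {p}ᶜ, (x q - a α)) / ∏ β ∈ {α}ᶜ, (a β - a α)) k

theorem hasFDerivAt_andersonMap (x : Fin (m + 1) → ℝ) :
    HasFDerivAt (andersonMap a) (toLin' (andersonJacobian a x)).toContinuousLinearMap x := by
  refine hasFDerivAt_pi'.2 fun k => ?_
  induction k using Fin.lastCases with
  | last =>
    simp only [andersonMap, Fin.lastCases_last]
    convert (HasFDerivAt.fun_sum (u := univ) (A := fun p (y : Fin (m + 1) → ℝ) => y p)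
      fun p _ => hasFDerivAt_apply (𝕜 := ℝ) p x).sub_const (∑ α, a α) using 1
    ext v
    simp [andersonJacobian, mulVec, dotProduct]
  | cast α =>
    simp only [andersonMap, Fin.lastCases_castSucc, div_eq_mul_inv, neg_mul_comm]
    refine ((HasFDerivAt.finsetProd (u := univ)
      (g := fun p (y : Fin (m + 1) → ℝ) => y p - a α) fun p _ =>
        (hasFDerivAt_apply (𝕜 := ℝ) p x).sub_const (a α)).mul_const _).congr_fderiv ?_
    ext v
    simp [andersonJacobian, mulVec, dotProduct, compl_singleton, mul_sum, div_eq_mul_inv]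
    exact sum_congr rfl fun p _ => by ring

theorem andersonJacobian_eq_diagonal_mul (x : Fin (m + 1) → ℝ) :
    andersonJacobian a x =
      diagonal (Fin.lastCases 1 fun α => (-1) ^ (m + 1) / ∏ β ∈ {α}ᶜ, (a β - a α)) *
        (evalLeadingCoeffMatrix a * nodalCoeffMatrix x) := by
  rw [evalLeadingCoeffMatrix_mul_nodalCoeffMatrix]
  ext k p
  induction k using Fin.lastCases with
  | last => simp [andersonJacobian]
  | cast α =>
    simp only [andersonJacobian, diagonal_mul, of_apply, Fin.lastCases_castSucc]
    have h := prod_neg (s := {p}ᶜ) fun q => a α - x q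
    simp only [neg_sub, card_compl, card_singleton, Fintype.card_fin, add_tsub_cancel_right] at h
    rw [h]
    ring

theorem abs_det_andersonJacobian {x : Fin (m + 1) → ℝ} (hx : Function.Injective x) :
    |det (andersonJacobian a x)| = |det (vandermonde x)| / |det (vandermonde a)| := by
  have hdiag : ∏ k, |Fin.lastCases (motive := fun _ => ℝ) 1
      (fun α => (-1) ^ (m + 1) / ∏ β ∈ {α}ᶜ, (a β - a α)) k| =
        (|det (vandermonde a)| ^ 2)⁻¹ := by
    rw [Fin.prod_univ_castSucc, ← prod_prod_compl_abs_sub, ← prod_inv_distrib]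
    simp [abs_div, abs_prod]
  rw [andersonJacobian_eq_diagonal_mul, det_mul, det_mul, det_diagonal, abs_mul, abs_mul,
    abs_prod, hdiag, det_evalLeadingCoeffMatrix, abs_det_nodalCoeffMatrix hx]
  rcases eq_or_ne (det (vandermonde a)) 0 with h | h
  · simp [h]
  · field_simp

end Anderson

section NatIndexing

theorem map_univ_val_add_one (n : ℕ) :
    univ.map ((Fin.valEmbedding (n := n)).trans (addRightEmbedding 1)) = Icc 1 n := by
  rw [← Finset.map_map, Fin.map_valEmbedding_univ, Nat.Iio_eq_range, range_eq_Ico,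
    map_add_right_Ico]
  rfl

theorem map_Ioi_val_add_one {n : ℕ} (i : Fin n) :
    (Ioi i).map ((Fin.valEmbedding (n := n)).trans (addRightEmbedding 1)) =
      Icc ((i : ℕ) + 1 + 1) n := by
  rw [← Finset.map_map, Fin.map_valEmbedding_Ioi, map_add_right_Ioo]
  ext q
  simp only [mem_Ioo, mem_Icc]
  omega

variable {M : Type*} [CommMonoid M]

@[to_additive sum_Icc_one_eq_sum_fin]
theorem prod_Icc_one_eq_prod_fin (n : ℕ) (f : ℕ → M) :
    ∏ p ∈ Icc 1 n, f p = ∏ i : Fin n, f (i + 1) := by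
  rw [← map_univ_val_add_one, prod_map]
  rfl

theorem prod_erase_Icc_one_eq_prod_compl {n : ℕ} (f : ℕ → M) (α : Fin n) :
    ∏ β ∈ (Icc 1 n).erase (α + 1), f β = ∏ j ∈ {α}ᶜ, f (j + 1) := by
  rw [← map_univ_val_add_one, compl_singleton]
  exact (congrArg (∏ β ∈ ·, f β) (map_erase _ univ α).symm).trans (prod_map _ _ _)

theorem prod_Icc_one_prod_Icc_add_one (n : ℕ) (g : ℕ → ℕ → M) :
    ∏ p ∈ Icc 1 n, ∏ q ∈ Icc (p + 1) n, g p q =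
      ∏ i : Fin n, ∏ j ∈ Ioi i, g (i + 1) (j + 1) := by
  rw [prod_Icc_one_eq_prod_fin]
  refine prod_congr rfl fun i _ => ?_
  rw [← map_Ioi_val_add_one, prod_map]
  rfl

end NatIndexing

theorem mval_add_one {n : ℕ} (μ : Fin n → ℝ) (i : Fin n) : mval μ (i + 1) = μ i := by
  simp [mval]

theorem Fmap_succ_eq_andersonMap (m : ℕ) (lam : ℕ → ℝ) :
    Fmap (m + 1) lam = andersonMap fun α : Fin m => lam (α + 1) := by
  funext x k
  induction k using Fin.lastCases with
  | last => simp [Fmap, etav, andersonMap, sum_Icc_one_eq_sum_fin, mval_add_one]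
  | cast α =>
    simp [Fmap, xiv, andersonMap, prod_Icc_one_eq_prod_fin, prod_erase_Icc_one_eq_prod_compl,
      mval_add_one]

theorem strictMono_of_mem_Xi {m : ℕ} {lam : ℕ → ℝ} {μ : Fin (m + 1) → ℝ}
    (hμ : μ ∈ Xi (m + 1) lam) : StrictMono μ := by
  refine Fin.strictMono_iff_lt_succ.2 fun i => ?_
  have h := hμ (i + 1) (by omega) (by simp)
  rw [← mval_add_one μ, ← mval_add_one μ]
  simp only [Fin.val_castSucc, Fin.val_succ]
  exact h.1.trans h.2

/-- Lemma 2.3(c): the Jacobian of the change of variables `μ ↦ (ξ, η)`. -/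
theorem anderson_jacobian
    (n : ℕ) (hn : 1 ≤ n) (lam : ℕ → ℝ)
    (hlam : ∀ α : ℕ, 1 ≤ α → α + 1 ≤ n - 1 → lam α < lam (α + 1))
    (μ : Fin n → ℝ) (hμ : μ ∈ Xi n lam) :
    DifferentiableAt ℝ (Fmap n lam) μ ∧
    |LinearMap.det (fderiv ℝ (Fmap n lam) μ : (Fin n → ℝ) →ₗ[ℝ] (Fin n → ℝ))| =
      (∏ p ∈ Icc 1 n, ∏ q ∈ Icc (p + 1) n, (mval μ q - mval μ p)) /
        ∏ α ∈ Icc 1 (n - 1), ∏ β ∈ Icc (α + 1) (n - 1), (lam β - lam α) := by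
  obtain ⟨m, rfl⟩ : ∃ m, n = m + 1 := ⟨n - 1, by omega⟩
  have hlamOn : StrictMonoOn lam (Set.Icc 1 m) :=
    strictMonoOn_of_lt_add_one Set.ordConnected_Icc fun α _ hα hα' =>
      hlam α hα.1 (by simpa using hα'.2)
  have hlamMono : StrictMono fun α : Fin m => lam (α + 1) := fun i j hij =>
    hlamOn ⟨by omega, by omega⟩ ⟨by omega, by omega⟩ (by simpa using hij)
  have hμmono := strictMono_of_mem_Xi hμ
  have hF := hasFDerivAt_andersonMap (fun α : Fin m => lam (α + 1)) μ
  rw [Fmap_succ_eq_andersonMap]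
  refine ⟨hF.differentiableAt, ?_⟩
  rw [hF.fderiv, LinearMap.coe_toContinuousLinearMap, LinearMap.det_toLin',
    abs_det_andersonJacobian _ hμmono.injective, abs_of_pos (det_vandermonde_pos hμmono),
    abs_of_pos (det_vandermonde_pos hlamMono), det_vandermonde, det_vandermonde,
    Nat.add_sub_cancel, prod_Icc_one_prod_Icc_add_one, prod_Icc_one_prod_Icc_add_one]
  simp only [mval_add_one]
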